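/- arXiv:1607.05831 — 4 statements merged into one kernel-verified Lean document; each statement's English description precedes it below -/
import Mathlib

section
/- Let a > 0 and b ∈ ℝ, and set h(s) = a·e^{−bs} for s ≥ 0. Let f, g : [0,∞) → [0,∞) be measurable functions such that ∫_0^t f(s) ds < ∞ for every t ≥ 0, and assume that for every t ≥ 0, f(t) ≤ g(t) + ∫_0^t f(t−s) h(s) ds. Then for every t ≥ 0, f(t) ≤ g(t) + a·∫_0^t g(t−s) e^{(a−b)s} ds. -/
/-!
Put `K₀(s) = a e^{-bs}` and `Kₙ₊₁ = K₀ ∗ Kₙ`, so that `Kₙ(s) = a e^{-bs} (as)ⁿ / n!`.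
Substituting the hypothesis into itself `n` times (associativity of `∗` is Tonelli on a
triangle) gives `f ≤ g + ∑_{k<n} g ∗ K_k + f ∗ Kₙ`. On `[0, t]` the kernel `Kₙ` is at most
`a e^{|b|t} (at)ⁿ / n!`, so the remainder `f ∗ Kₙ (t)` tends to `0` because `∫₀ᵗ f < ∞`,
while `∑ₙ Kₙ(s) = a e^{(a-b)s}`.
-/

open MeasureTheory Set ENNReal Filter Topology

noncomputable def lconv (F H : ℝ → ℝ≥0∞) (t : ℝ) : ℝ≥0∞ :=
  ∫⁻ s in Ioc 0 t, F (t - s) * H s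

theorem setLIntegral_Ioc_comp_const_sub (F : ℝ → ℝ≥0∞) (t : ℝ) :
    ∫⁻ s in Ioc 0 t, F (t - s) = ∫⁻ s in Ioc 0 t, F s := by
  rw [(volume.measurePreserving_sub_left t).setLIntegral_comp_emb
    (measurableEmbedding_subLeft t), image_const_sub_Ioc, sub_self, sub_zero,
    Measure.restrict_congr_set Ico_ae_eq_Ioc]

theorem setLIntegral_Ioc_comp_sub_const (φ : ℝ → ℝ≥0∞) (s t : ℝ) :
    ∫⁻ u in Ioc s t, φ (u - s) = ∫⁻ r in Ioc 0 (t - s), φ r := by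
  rw [(measurePreserving_sub_right volume s).setLIntegral_comp_emb
    (measurableEmbedding_subRight s), image_sub_const_Ioc, sub_self]

theorem setLIntegral_Ioc_Ioc_swap {φ : ℝ → ℝ → ℝ≥0∞}
    (hφ : Measurable (Function.uncurry φ)) (t : ℝ) :
    ∫⁻ s in Ioc 0 t, ∫⁻ u in Ioc s t, φ s u = ∫⁻ u in Ioc 0 t, ∫⁻ s in Ioo 0 u, φ s u := by
  set T : Set (ℝ × ℝ) := {p | 0 < p.1 ∧ p.1 < p.2 ∧ p.2 ≤ t}
  have hT : MeasurableSet T :=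
    (measurableSet_lt measurable_const measurable_fst).inter
      ((measurableSet_lt measurable_fst measurable_snd).inter
        (measurableSet_le measurable_snd measurable_const))
  have hs : ∀ s, (Ioc 0 t).indicator (fun s => ∫⁻ u in Ioc s t, φ s u) s
      = ∫⁻ u, T.indicator (Function.uncurry φ) (s, u) := by
    intro s
    by_cases hs : s ∈ Ioc 0 t
    · rw [indicator_of_mem hs, ← lintegral_indicator measurableSet_Ioc]
      congr 1 with u
      simp [T, indicator_apply, hs.1]
    · rw [indicator_of_notMem hs]
      have h0 : ∀ u, T.indicator (Function.uncurry φ) (s, u) = 0 := fun u =>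
        indicator_of_notMem (fun h : (s, u) ∈ T => hs ⟨h.1, h.2.1.le.trans h.2.2⟩) _
      simp only [h0, lintegral_zero]
  have hu : ∀ u, (Ioc 0 t).indicator (fun u => ∫⁻ s in Ioo 0 u, φ s u) u
      = ∫⁻ s, T.indicator (Function.uncurry φ) (s, u) := by
    intro u
    by_cases hu : u ∈ Ioc 0 t
    · rw [indicator_of_mem hu, ← lintegral_indicator measurableSet_Ioo]
      congr 1 with s
      simp [T, indicator_apply, hu.2]
    · rw [indicator_of_notMem hu]
      have h0 : ∀ s, T.indicator (Function.uncurry φ) (s, u) = 0 := fun s =>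
        indicator_of_notMem (fun h : (s, u) ∈ T => hu ⟨h.1.trans h.2.1, h.2.2⟩) _
      simp only [h0, lintegral_zero]
  rw [← lintegral_indicator (measurableSet_Ioc (a := 0) (b := t)),
    ← lintegral_indicator (measurableSet_Ioc (a := 0) (b := t))]
  simp only [hs, hu]
  exact lintegral_lintegral_swap (hφ.indicator hT).aemeasurable

section Convolution

variable {F G H K : ℝ → ℝ≥0∞}

theorem lconv_assoc (hF : Measurable F) (hH : Measurable H) (hK : Measurable K) (t : ℝ) :
    lconv (lconv F H) K t = lconv F (lconv H K) t := by
  calc lconv (lconv F H) K t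
      = ∫⁻ s in Ioc 0 t, ∫⁻ u in Ioc s t, F (t - u) * H (u - s) * K s := by
        refine setLIntegral_congr_fun measurableSet_Ioc fun s _ => ?_
        rw [lconv, ← lintegral_mul_const _ (by fun_prop), ← setLIntegral_Ioc_comp_sub_const]
        simp only [sub_sub_sub_cancel_right]
    _ = ∫⁻ u in Ioc 0 t, ∫⁻ s in Ioo 0 u, F (t - u) * H (u - s) * K s :=
        setLIntegral_Ioc_Ioc_swap (by fun_prop) t
    _ = lconv F (lconv H K) t := by
        refine setLIntegral_congr_fun measurableSet_Ioc fun u _ => ?_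
        simp only [mul_assoc]
        rw [lconv, lintegral_const_mul _ (by fun_prop), Measure.restrict_congr_set Ioo_ae_eq_Ioc]

theorem lconv_add_left (hG : Measurable G) (hH : Measurable H) (t : ℝ) :
    lconv (G + F) H t = lconv G H t + lconv F H t := by
  simp only [lconv, Pi.add_apply, add_mul]
  exact lintegral_add_left (by fun_prop) _

theorem lconv_mono_left (h : ∀ x, 0 ≤ x → F x ≤ G x) (t : ℝ) : lconv F H t ≤ lconv G H t :=
  setLIntegral_mono' measurableSet_Ioc fun s hs => by
    gcongr; exact h _ (sub_nonneg.2 hs.2)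

theorem lconv_le_mul_setLIntegral (hF : Measurable F) {c : ℝ≥0∞} {t : ℝ}
    (hH : ∀ s ∈ Ioc 0 t, H s ≤ c) : lconv F H t ≤ c * ∫⁻ s in Ioc 0 t, F s :=
  calc lconv F H t ≤ ∫⁻ s in Ioc 0 t, F (t - s) * c :=
        setLIntegral_mono' measurableSet_Ioc fun s hs => by gcongr; exact hH s hs
    _ = c * ∫⁻ s in Ioc 0 t, F s := by
        rw [lintegral_mul_const _ (by fun_prop), setLIntegral_Ioc_comp_const_sub, mul_comm]

end Convolution

section NeumannSeries

variable {F G : ℝ → ℝ≥0∞} {K : ℕ → ℝ → ℝ≥0∞}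
  (hF : Measurable F) (hG : Measurable G) (hK : ∀ n, Measurable (K n))
  (hKsucc : ∀ n u, 0 < u → lconv (K 0) (K n) u = K (n + 1) u)
  (hle : ∀ t ≥ 0, F t ≤ G t + lconv F (K 0) t)
include hF hG hK hKsucc hle

theorem lconv_le_lconv_add_lconv_succ (n : ℕ) (t : ℝ) :
    lconv F (K n) t ≤ lconv G (K n) t + lconv F (K (n + 1)) t :=
  calc lconv F (K n) t ≤ lconv (G + lconv F (K 0)) (K n) t := lconv_mono_left hle t
    _ = lconv G (K n) t + lconv (lconv F (K 0)) (K n) t := lconv_add_left hG (hK n) t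
    _ = lconv G (K n) t + lconv F (K (n + 1)) t := by
        rw [lconv_assoc hF (hK 0) (hK n)]
        congr 1
        exact setLIntegral_congr_fun measurableSet_Ioc fun u hu => by rw [hKsucc n u hu.1]

theorem le_add_sum_lconv_add_lconv (n : ℕ) {t : ℝ} (ht : 0 ≤ t) :
    F t ≤ G t + ∑ k ∈ Finset.range n, lconv G (K k) t + lconv F (K n) t := by
  induction n with
  | zero => simpa using hle t ht
  | succ n ih =>
    calc F t ≤ G t + ∑ k ∈ Finset.range n, lconv G (K k) t + lconv F (K n) t := ih
      _ ≤ G t + ∑ k ∈ Finset.range n, lconv G (K k) t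
            + (lconv G (K n) t + lconv F (K (n + 1)) t) := by
          gcongr; exact lconv_le_lconv_add_lconv_succ hF hG hK hKsucc hle n t
      _ = G t + ∑ k ∈ Finset.range (n + 1), lconv G (K k) t + lconv F (K (n + 1)) t := by
          rw [Finset.sum_range_succ]; ring

theorem le_add_lconv_tsum {t : ℝ} (ht : 0 ≤ t)
    (hrem : Tendsto (fun n => lconv F (K n) t) atTop (𝓝 0)) :
    F t ≤ G t + lconv G (fun s => ∑' n, K n s) t := by
  have hsum : lconv G (fun s => ∑' n, K n s) t = ∑' n, lconv G (K n) t := by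
    simp only [lconv, ← ENNReal.tsum_mul_left]
    exact lintegral_tsum fun n => by fun_prop
  rw [hsum]
  refine ge_of_tendsto (by simpa using hrem.const_add (G t + ∑' n, lconv G (K n) t))
    (Eventually.of_forall fun n => ?_)
  calc F t ≤ G t + ∑ k ∈ Finset.range n, lconv G (K k) t + lconv F (K n) t :=
        le_add_sum_lconv_add_lconv hF hG hK hKsucc hle n ht
    _ ≤ G t + ∑' k, lconv G (K k) t + lconv F (K n) t := by
        gcongr; exact ENNReal.sum_le_tsum _

end NeumannSeries

theorem setLIntegral_Ioc_ofReal_pow (n : ℕ) {u : ℝ} (hu : 0 ≤ u) :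
    ∫⁻ s in Ioc 0 u, ENNReal.ofReal (s ^ n) = ENNReal.ofReal (u ^ (n + 1) / (n + 1)) := by
  rw [← ofReal_integral_eq_lintegral_ofReal, ← intervalIntegral.integral_of_le hu, integral_pow]
  · simp
  · exact (continuous_pow n).integrableOn_Ioc
  · exact (ae_restrict_iff' measurableSet_Ioc).2 (.of_forall fun s hs => pow_nonneg hs.1.le n)

noncomputable def expKernel (a b : ℝ) (n : ℕ) (s : ℝ) : ℝ≥0∞ :=
  ENNReal.ofReal (a * Real.exp (-b * s)) * ENNReal.ofReal ((a * s) ^ n / n.factorial)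

section ExpKernel

variable {a : ℝ} (b : ℝ)

theorem measurable_expKernel (n : ℕ) : Measurable (expKernel a b n) := by
  unfold expKernel; fun_prop

theorem expKernel_zero (s : ℝ) : expKernel a b 0 s = ENNReal.ofReal (a * Real.exp (-b * s)) := by
  simp [expKernel]

theorem lconv_expKernel_zero_expKernel (ha : 0 ≤ a) (n : ℕ) {u : ℝ} (hu : 0 < u) :
    lconv (expKernel a b 0) (expKernel a b n) u = expKernel a b (n + 1) u := by
  have hpt : ∀ s ∈ Ioc 0 u, expKernel a b 0 (u - s) * expKernel a b n s
      = ENNReal.ofReal (a * Real.exp (-b * u))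
        * (ENNReal.ofReal (a ^ (n + 1) / n.factorial) * ENNReal.ofReal (s ^ n)) := by
    intro s hs
    have : 0 ≤ s := hs.1.le
    rw [expKernel_zero, expKernel, ← ofReal_mul (by positivity), ← ofReal_mul (by positivity),
      ← ofReal_mul (by positivity), ← ofReal_mul (by positivity)]
    congr 1
    rw [show -b * u = -b * (u - s) + -b * s by ring, Real.exp_add]
    ring
  rw [lconv, setLIntegral_congr_fun measurableSet_Ioc hpt, lintegral_const_mul' _ _ ofReal_ne_top,
    lintegral_const_mul' _ _ ofReal_ne_top, setLIntegral_Ioc_ofReal_pow n hu.le, expKernel,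
    ← ofReal_mul (by positivity)]
  congr 2
  rw [Nat.factorial_succ]
  push_cast
  field_simp
  ring

theorem tsum_expKernel (ha : 0 ≤ a) {s : ℝ} (hs : 0 ≤ s) :
    ∑' n, expKernel a b n s = ENNReal.ofReal a * ENNReal.ofReal (Real.exp ((a - b) * s)) := by
  have hexp : ∑' n, ENNReal.ofReal ((a * s) ^ n / n.factorial)
      = ENNReal.ofReal (Real.exp (a * s)) := by
    rw [← ENNReal.ofReal_tsum_of_nonneg (fun n => by positivity)
      (Real.summable_pow_div_factorial (a * s)), Real.exp_eq_exp_ℝ, NormedSpace.exp_eq_tsum_div]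
  simp only [expKernel]
  rw [ENNReal.tsum_mul_left, hexp, ← ENNReal.ofReal_mul ha, ← ENNReal.ofReal_mul (by positivity),
    mul_assoc, ← Real.exp_add]
  ring_nf

theorem expKernel_le (ha : 0 ≤ a) (n : ℕ) {s t : ℝ} (hs : s ∈ Ioc 0 t) :
    expKernel a b n s
      ≤ ENNReal.ofReal (a * Real.exp (|b| * t)) * ENNReal.ofReal ((a * t) ^ n / n.factorial) := by
  have hbs : -b * s ≤ |b| * t := calc
    -b * s ≤ |b| * s := by gcongr; exacts [hs.1.le, neg_le_abs b]
    _ ≤ |b| * t := by gcongr; exact hs.2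
  unfold expKernel
  gcongr
  exacts [mul_nonneg ha hs.1.le, hs.2]

theorem tendsto_lconv_expKernel {F : ℝ → ℝ≥0∞} (hF : Measurable F) {t : ℝ}
    (hFt : ∫⁻ s in Ioc 0 t, F s ≠ ∞) (ha : 0 ≤ a) :
    Tendsto (fun n => lconv F (expKernel a b n) t) atTop (𝓝 0) := by
  have hlim : Tendsto (fun n => ENNReal.ofReal (a * Real.exp (|b| * t))
      * ENNReal.ofReal ((a * t) ^ n / n.factorial) * ∫⁻ s in Ioc 0 t, F s) atTop (𝓝 0) := by
    have h0 : Tendsto (fun n : ℕ => ENNReal.ofReal ((a * t) ^ n / n.factorial)) atTop (𝓝 0) := by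
      simpa using ENNReal.tendsto_ofReal (FloorSemiring.tendsto_pow_div_factorial_atTop (a * t))
    simpa using ENNReal.Tendsto.mul_const (ENNReal.Tendsto.const_mul
      (a := ENNReal.ofReal (a * Real.exp (|b| * t))) h0 (Or.inr ofReal_ne_top)) (Or.inr hFt)
  exact tendsto_of_tendsto_of_tendsto_of_le_of_le tendsto_const_nhds hlim (fun _ => bot_le)
    fun n => lconv_le_mul_setLIntegral hF fun s hs => expKernel_le b ha n hs

end ExpKernel

theorem exponential_kernel_convolution_bound_general
    (a b : ℝ) (ha : 0 < a) (f g : ℝ → ℝ)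
    (hfm : Measurable f) (hgm : Measurable g)
    (hfint : ∀ t ≥ (0:ℝ), (∫⁻ s in Ioc (0:ℝ) t, ENNReal.ofReal (f s)) < ⊤)
    (hineq : ∀ t ≥ (0:ℝ), ENNReal.ofReal (f t) ≤ ENNReal.ofReal (g t) +
      ∫⁻ s in Ioc (0:ℝ) t,
        ENNReal.ofReal (f (t - s)) * ENNReal.ofReal (a * Real.exp (-b * s))) :
    ∀ t ≥ (0:ℝ), ENNReal.ofReal (f t) ≤ ENNReal.ofReal (g t) +
      ENNReal.ofReal a * ∫⁻ s in Ioc (0:ℝ) t,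
        ENNReal.ofReal (g (t - s)) * ENNReal.ofReal (Real.exp ((a - b) * s)) := by
  intro t ht
  have hK0 : expKernel a b 0 = fun s => ENNReal.ofReal (a * Real.exp (-b * s)) :=
    funext (expKernel_zero b)
  have hsum : ∀ s ∈ Ioc 0 t, ENNReal.ofReal (g (t - s)) * ∑' n, expKernel a b n s
      = ENNReal.ofReal a
        * (ENNReal.ofReal (g (t - s)) * ENNReal.ofReal (Real.exp ((a - b) * s))) :=
    fun s hs => by rw [tsum_expKernel b ha.le hs.1.le, mul_left_comm]
  calc ENNReal.ofReal (f t)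
      ≤ ENNReal.ofReal (g t)
          + lconv (fun x => ENNReal.ofReal (g x)) (fun s => ∑' n, expKernel a b n s) t :=
        le_add_lconv_tsum hfm.ennreal_ofReal hgm.ennreal_ofReal (measurable_expKernel b)
          (fun n _ hu => lconv_expKernel_zero_expKernel b ha.le n hu)
          (by simpa only [lconv, hK0] using hineq) ht
          (tendsto_lconv_expKernel b hfm.ennreal_ofReal (hfint t ht).ne ha.le)
    _ = _ := by
        rw [lconv, setLIntegral_congr_fun measurableSet_Ioc hsum,
          lintegral_const_mul' _ _ ofReal_ne_top]

/-- Exponential-kernel Grönwall lemma: if `f ≤ g + f ∗ h` with `h s = a·exp(−b·s)`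
(integrals taken in `[0,∞]`), then `f(t) ≤ g(t) + a·∫_0^t g(t−s)·exp((a−b)·s) ds`. -/
theorem exponential_kernel_convolution_bound
    (a b : ℝ) (ha : 0 < a) (f g : ℝ → ℝ)
    (hfm : Measurable f) (hgm : Measurable g)
    (hf0 : ∀ t, 0 ≤ f t) (hg0 : ∀ t, 0 ≤ g t)
    (hfint : ∀ t ≥ (0:ℝ), (∫⁻ s in Ioc (0:ℝ) t, ENNReal.ofReal (f s)) < ⊤)
    (hineq : ∀ t ≥ (0:ℝ), ENNReal.ofReal (f t) ≤ ENNReal.ofReal (g t) +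
      ∫⁻ s in Ioc (0:ℝ) t,
        ENNReal.ofReal (f (t - s)) * ENNReal.ofReal (a * Real.exp (-b * s))) :
    ∀ t ≥ (0:ℝ), ENNReal.ofReal (f t) ≤ ENNReal.ofReal (g t) +
      ENNReal.ofReal a * ∫⁻ s in Ioc (0:ℝ) t,
        ENNReal.ofReal (g (t - s)) * ENNReal.ofReal (Real.exp ((a - b) * s)) :=
  exponential_kernel_convolution_bound_general a b ha f g hfm hgm hfint hineq
end

section
/- Let θ* > 0 and T > 0. For each integer n ≥ 1, let X_n have Poisson distribution of parameter n·√θ*·T. Then for every natural number p ≥ 1, the p-th moment converges: E[(√n·((X_n/(nT))² − θ*))^p] → ∫_ℝ x^p dν(x) as n → ∞, where ν is the Gaussian measure on ℝ with mean 0 and variance 4·(θ*)^{3/2}/T. -/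
/-!
Write `r = n √θ* T` for the Poisson mean and `W = (X_n - r) / √r`. Since `(r / (n T))² = θ*`,
the statistic is exactly `a W + ε_n W²` with `a² = 4 θ*^{3/2} / T` and `ε_n = √θ* / (√n T) → 0`.
The Stein–Chen identity `E[X f(X)] = r E[f(X + 1)]` gives the recursion
`μ_{q+1} = r ∑_{i<q} C(q, i) μ_i` for the central moments of `Poisson(r)`, so the moments of `W`
satisfy, up to terms of order `r^{-1/2}`, the recursion `m_{q+2} = (q + 1) m_q` that Stein's
identity gives for the moments of `N(0, 1)`. Expanding `(a W + ε_n W²)^p` binomially, only `a^p W^p`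
survives in the limit, and `a^p E[G^p]` is the `p`-th moment of `N(0, a²)`.
-/

open scoped NNReal Nat
open MeasureTheory ProbabilityTheory Filter Topology Real

namespace ProbabilityTheory

lemma integrable_exp_mul_poissonMeasure (r : ℝ≥0) (t : ℝ) :
    Integrable (fun k : ℕ ↦ exp (t * k)) (poissonMeasure r) := by
  refine integrable_poissonMeasure_iff.2 <|
    ((summable_pow_div_factorial (r * exp t)).mul_left (exp (-r))).congr fun k ↦ ?_
  rw [norm_of_nonneg (exp_pos _).le, mul_comm t, exp_nat_mul, mul_pow]
  ring

lemma integrable_pow_sub_poissonMeasure (r : ℝ≥0) (c : ℝ) (q : ℕ) :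
    Integrable (fun k : ℕ ↦ ((k : ℝ) - c) ^ q) (poissonMeasure r) := by
  have hexp (t : ℝ) : Integrable (fun k : ℕ ↦ exp (t * ((k : ℝ) - c))) (poissonMeasure r) :=
    ((integrable_exp_mul_poissonMeasure r t).const_mul (exp (-(t * c)))).congr <|
      ae_of_all _ fun k ↦ by simp only [← exp_add]; ring_nf
  exact integrable_pow_of_integrable_exp_mul one_ne_zero (hexp 1) (hexp (-1)) q

lemma integral_mul_poissonMeasure (r : ℝ≥0) (f : ℕ → ℝ) :
    ∫ k, (k : ℝ) * f k ∂poissonMeasure r = r * ∫ k, f (k + 1) ∂poissonMeasure r := by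
  have hsupp : Function.support (fun k : ℕ ↦ (exp (-r) * r ^ k / (k)!) • ((k : ℝ) * f k)) ⊆
      Set.range Nat.succ := by
    rintro (_ | k) hk
    · simp at hk
    · exact ⟨k, rfl⟩
  rw [integral_poissonMeasure, integral_poissonMeasure, ← tsum_mul_left,
    ← Nat.succ_injective.tsum_eq hsupp]
  congr with k
  simp only [smul_eq_mul, Nat.succ_eq_add_one, Nat.factorial_succ, Nat.cast_mul, pow_succ]
  field_simp

noncomputable def poissonCentralMoment (r : ℝ≥0) (q : ℕ) : ℝ :=
  ∫ k, ((k : ℝ) - r) ^ q ∂poissonMeasure r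

lemma poissonCentralMoment_zero (r : ℝ≥0) : poissonCentralMoment r 0 = 1 := by
  simp [poissonCentralMoment]

lemma poissonCentralMoment_add_one (r : ℝ≥0) (q : ℕ) :
    poissonCentralMoment r (q + 1) =
      r * ∑ i ∈ Finset.range q, (q.choose i : ℝ) * poissonCentralMoment r i := by
  have hint := integrable_pow_sub_poissonMeasure r r
  have hint_mul : Integrable (fun k : ℕ ↦ (k : ℝ) * ((k : ℝ) - r) ^ q) (poissonMeasure r) :=
    ((hint (q + 1)).add ((hint q).const_mul r)).congr <| ae_of_all _ fun k ↦ by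
      simp only [Pi.add_apply]; ring
  have hshift : ∫ k, (((k + 1 : ℕ) : ℝ) - r) ^ q ∂poissonMeasure r =
      ∑ i ∈ Finset.range (q + 1), (q.choose i : ℝ) * poissonCentralMoment r i := by
    simp_rw [Nat.cast_add_one, show ∀ x : ℝ, x + 1 - r = (x - r) + 1 from fun x ↦ by ring,
      add_pow, one_pow, mul_one]
    rw [integral_finsetSum _ fun i _ ↦ (hint i).mul_const _]
    simp_rw [poissonCentralMoment, ← integral_const_mul, mul_comm]
  calc poissonCentralMoment r (q + 1)
      = ∫ k, (k : ℝ) * ((k : ℝ) - r) ^ q ∂poissonMeasure r - r * poissonCentralMoment r q := by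
        rw [poissonCentralMoment, poissonCentralMoment, ← integral_const_mul,
          ← integral_sub hint_mul ((hint q).const_mul r)]
        congr with k
        ring
    _ = r * ∑ i ∈ Finset.range q, (q.choose i : ℝ) * poissonCentralMoment r i := by
        rw [integral_mul_poissonMeasure, hshift, Finset.sum_range_succ, Nat.choose_self]
        push_cast
        ring

lemma hasDerivAt_gaussianPDFReal (μ : ℝ) (v : ℝ≥0) (x : ℝ) :
    HasDerivAt (gaussianPDFReal μ v) (-((x - μ) / v) * gaussianPDFReal μ v x) x := by
  have hexp : HasDerivAt (fun y ↦ -(y - μ) ^ 2 / (2 * v)) (-((x - μ) / v)) x :=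
    ((((hasDerivAt_id' x).sub_const μ).pow 2).neg.div_const (2 * (v : ℝ))).congr_deriv (by
      rcases eq_or_ne (v : ℝ) 0 with hv | hv
      · simp [hv]
      · field_simp; ring)
  exact (hexp.exp.const_mul (√(2 * π * v))⁻¹).congr_deriv (by rw [gaussianPDFReal]; ring)

lemma integrable_pow_mul_gaussianPDFReal {v : ℝ≥0} (hv : v ≠ 0) (m : ℕ) :
    Integrable (fun x ↦ x ^ m * gaussianPDFReal 0 v x) := by
  have hb : 0 < (2 * (v : ℝ))⁻¹ := by positivity
  have hm : (-1 : ℝ) < m := by linarith [m.cast_nonneg (α := ℝ)]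
  refine ((integrable_rpow_mul_exp_neg_mul_sq hb hm).const_mul (√(2 * π * v))⁻¹).congr
    (ae_of_all _ fun x ↦ ?_)
  simp only [gaussianPDFReal, rpow_natCast, sub_zero]
  ring_nf

lemma integral_pow_add_two_gaussianReal (v : ℝ≥0) (q : ℕ) :
    ∫ x, x ^ (q + 2) ∂gaussianReal 0 v = v * (q + 1) * ∫ x, x ^ q ∂gaussianReal 0 v := by
  rcases eq_or_ne v 0 with rfl | hv
  · simp [gaussianReal_zero_var]
  simp only [integral_gaussianReal_eq_integral_smul hv, smul_eq_mul]
  -- Stein's identity: integrate `x ^ (q + 1)` by parts against `x φ(x) = -v φ'(x)`.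
  have hibp := integral_mul_deriv_eq_deriv_mul_of_integrable
    (u := fun x ↦ x ^ (q + 1)) (u' := fun x ↦ (q + 1) * x ^ q)
    (v := fun x ↦ -v * gaussianPDFReal 0 v x) (v' := fun x ↦ x * gaussianPDFReal 0 v x)
    (fun x _ ↦ by simpa using hasDerivAt_pow (q + 1) x)
    (fun x _ ↦ by
      convert (hasDerivAt_gaussianPDFReal 0 v x).const_mul (-(v : ℝ)) using 1
      simp only [sub_zero]; field_simp)
    (((integrable_pow_mul_gaussianPDFReal hv (q + 2))).congr (ae_of_all _ fun x ↦ by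
      simp only [Pi.mul_apply]; ring))
    (((integrable_pow_mul_gaussianPDFReal hv q).const_mul (-(v * (q + 1)))).congr
      (ae_of_all _ fun x ↦ by simp only [Pi.mul_apply]; ring))
    (((integrable_pow_mul_gaussianPDFReal hv (q + 1)).const_mul (-v)).congr
      (ae_of_all _ fun x ↦ by simp only [Pi.mul_apply]; ring))
  calc ∫ x, gaussianPDFReal 0 v x * x ^ (q + 2)
      = ∫ x, x ^ (q + 1) * (x * gaussianPDFReal 0 v x) := by congr with x; ring
    _ = v * (q + 1) * ∫ x, gaussianPDFReal 0 v x * x ^ q := by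
      rw [hibp, ← integral_neg, ← integral_const_mul]
      congr with x
      ring

lemma integral_pow_gaussianReal_of_coe_eq_sq {v : ℝ≥0} {a : ℝ} (h : (v : ℝ) = a ^ 2) (p : ℕ) :
    ∫ x, x ^ p ∂gaussianReal 0 v = a ^ p * ∫ x, x ^ p ∂gaussianReal 0 1 := by
  have hv : gaussianReal 0 v = (gaussianReal 0 1).map (a * ·) := by
    rw [gaussianReal_map_const_mul, mul_zero, mul_one]
    congr
    exact NNReal.coe_injective h
  rw [hv, integral_map (by fun_prop) (by fun_prop)]
  simp only [mul_pow, integral_const_mul]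

lemma poissonCentralMoment_add_two_div {r : ℝ≥0} (hr : r ≠ 0) (q : ℕ) :
    poissonCentralMoment r (q + 2) / √(r : ℝ) ^ (q + 2) =
      (q + 1) * (poissonCentralMoment r q / √(r : ℝ) ^ q) +
        ∑ j ∈ Finset.range q, ((q + 1).choose j : ℝ) *
          (poissonCentralMoment r j / √(r : ℝ) ^ j) * (√(r : ℝ))⁻¹ ^ (q - j) := by
  have hs : √(r : ℝ) ≠ 0 := by positivity
  have hr : (r : ℝ) = √(r : ℝ) ^ 2 := (sq_sqrt r.coe_nonneg).symm
  set s := √(r : ℝ)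
  rw [poissonCentralMoment_add_one, Finset.sum_range_succ, Nat.choose_succ_self_right,
    mul_add, add_div, add_comm, Finset.mul_sum, Finset.sum_div]
  congr 1
  · push_cast
    rw [hr, pow_add]
    field_simp
  · refine Finset.sum_congr rfl fun j hj ↦ ?_
    obtain ⟨d, rfl⟩ := Nat.exists_eq_add_of_lt (Finset.mem_range.1 hj)
    rw [show j + d + 1 - j = d + 1 by omega, hr, inv_pow]
    field_simp
    ring

theorem tendsto_poissonCentralMoment_div_sqrt_pow (q : ℕ) :
    Tendsto (fun r : ℝ≥0 ↦ poissonCentralMoment r q / √(r : ℝ) ^ q) atTop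
      (𝓝 (∫ x, x ^ q ∂gaussianReal 0 1)) := by
  induction q using Nat.strong_induction_on with
  | _ q ih =>
  match q with
  | 0 => simp [poissonCentralMoment_zero]
  | 1 => simp [poissonCentralMoment_add_one]
  | q + 2 =>
    have hinv : Tendsto (fun r : ℝ≥0 ↦ (√(r : ℝ))⁻¹) atTop (𝓝 0) :=
      tendsto_inv_atTop_zero.comp <| tendsto_sqrt_atTop.comp (NNReal.tendsto_coe_atTop.2 tendsto_id)
    have hlim := ((ih q (by omega)).const_mul ((q : ℝ) + 1)).add <|
      tendsto_finsetSum (Finset.range q) fun j hj ↦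
        ((ih j (by simp at hj; omega)).const_mul ((q + 1).choose j : ℝ)).mul (hinv.pow (q - j))
    rw [Finset.sum_eq_zero fun j hj ↦ by rw [zero_pow (by simp at hj; omega), mul_zero],
      add_zero] at hlim
    rw [integral_pow_add_two_gaussianReal, NNReal.coe_one, one_mul]
    refine hlim.congr' ?_
    filter_upwards [eventually_ne_atTop 0] with r hr
    exact (poissonCentralMoment_add_two_div hr q).symm

theorem tendsto_integral_pow_mul_add_mul_sq {ι Ω : Type*} [MeasurableSpace Ω] {l : Filter ι}
    {μ : ι → Measure Ω} {W : ι → Ω → ℝ} {m : ℕ → ℝ} {ε : ι → ℝ}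
    (hW : ∀ i q, Integrable (fun ω ↦ W i ω ^ q) (μ i))
    (hm : ∀ q, Tendsto (fun i ↦ ∫ ω, W i ω ^ q ∂μ i) l (𝓝 (m q)))
    (hε : Tendsto ε l (𝓝 0)) (a : ℝ) (p : ℕ) :
    Tendsto (fun i ↦ ∫ ω, (a * W i ω + ε i * W i ω ^ 2) ^ p ∂μ i) l (𝓝 (a ^ p * m p)) := by
  have hexpand (i : ι) : ∫ ω, (a * W i ω + ε i * W i ω ^ 2) ^ p ∂μ i =
      ∑ j ∈ Finset.range (p + 1),
        ε i ^ j * (a ^ (p - j) * p.choose j * ∫ ω, W i ω ^ (p + j) ∂μ i) := by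
    have hpow (ω : Ω) : (a * W i ω + ε i * W i ω ^ 2) ^ p = ∑ j ∈ Finset.range (p + 1),
        ε i ^ j * (a ^ (p - j) * p.choose j) * W i ω ^ (p + j) := by
      rw [add_comm, add_pow]
      refine Finset.sum_congr rfl fun j hj ↦ ?_
      obtain ⟨d, rfl⟩ := Nat.exists_eq_add_of_le (Nat.lt_succ_iff.1 (Finset.mem_range.1 hj))
      rw [Nat.add_sub_cancel_left]
      ring
    simp_rw [hpow, integral_finsetSum _ fun j _ ↦ (hW i _).const_mul _, integral_const_mul,
      mul_assoc]
  simp_rw [hexpand]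
  have hlim := tendsto_finsetSum (Finset.range (p + 1)) fun j _ ↦
    (hε.pow j).mul (((hm (p + j)).const_mul (a ^ (p - j) * p.choose j)))
  rwa [Finset.sum_range_succ', Finset.sum_eq_zero fun j _ ↦ by simp, zero_add, pow_zero,
    one_mul, Nat.sub_zero, Nat.choose_zero_right, Nat.cast_one, mul_one, add_zero] at hlim

end ProbabilityTheory

lemma sqrt_mul_sq_div_sub_eq {θ T n : ℝ} (hθ : 0 < θ) (hT : 0 < T) (hn : 0 < n) (k : ℝ) :
    √n * ((k / (n * T)) ^ 2 - θ) =
      2 * √θ * √(√θ * T) / T * ((k - n * √θ * T) / √(n * √θ * T)) +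
        √θ / (√n * T) * ((k - n * √θ * T) / √(n * √θ * T)) ^ 2 := by
  have hθs : θ = √θ ^ 2 := (sq_sqrt hθ.le).symm
  have hnu : n = √n ^ 2 := (sq_sqrt hn.le).symm
  have hw : √(√θ * T) ^ 2 = √θ * T := sq_sqrt (by positivity)
  have hs := sqrt_pos.2 hθ
  have hu := sqrt_pos.2 hn
  have hw₀ := sqrt_pos.2 (mul_pos hs hT)
  rw [mul_assoc n, sqrt_mul hn.le]
  set s := √θ
  set u := √n
  set w := √(s * T)
  have hT' : T = w ^ 2 / s := by rw [hw]; field_simp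
  rw [hθs, hnu, hT']
  field_simp
  ring

/-- Convergence of moments for the MLE of the toy parametric model: for every `p ≥ 1`, the
`p`-th moment of `√n·((X_n/(nT))² − θ*)`, where `X_n` is Poisson with parameter `n·√θ*·T`,
converges to the `p`-th moment of the centered Gaussian measure with variance `4·θ*^{3/2}/T`. -/
theorem toy_model_mle_moment_convergence
    (θs T : ℝ) (hθ : 0 < θs) (hT : 0 < T) :
    ∀ p : ℕ, 1 ≤ p →
      Tendsto (fun nn : ℕ =>
          ∫ k, (Real.sqrt nn * (((k : ℝ) / (nn * T)) ^ 2 - θs)) ^ p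
            ∂(poissonMeasure (((nn : ℝ) * Real.sqrt θs * T).toNNReal)))
        atTop
        (𝓝 (∫ x, x ^ p ∂(gaussianReal 0 ((4 * θs ^ ((3:ℝ)/2) / T).toNNReal)))) := by
  intro p _
  set r : ℕ → ℝ≥0 := fun n ↦ ((n : ℝ) * √θs * T).toNNReal
  have hr (n : ℕ) : (r n : ℝ) = n * √θs * T := coe_toNNReal _ (by positivity)
  have hr_tendsto : Tendsto r atTop atTop :=
    tendsto_real_toNNReal_atTop.comp <|
      (tendsto_natCast_atTop_atTop.atTop_mul_const (sqrt_pos.2 hθ)).atTop_mul_const hT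
  have hvar : ((4 * θs ^ ((3 : ℝ) / 2) / T).toNNReal : ℝ) = (2 * √θs * √(√θs * T) / T) ^ 2 := by
    have h32 : θs ^ ((3 : ℝ) / 2) = θs * √θs := by
      rw [sqrt_eq_rpow, ← rpow_one_add' hθ.le (by norm_num)]; norm_num
    rw [coe_toNNReal _ (by positivity), h32, div_pow, mul_pow, mul_pow,
      sq_sqrt (show 0 ≤ √θs * T by positivity), sq_sqrt hθ.le]
    field_simp
    ring
  rw [integral_pow_gaussianReal_of_coe_eq_sq hvar]
  refine Tendsto.congr' ?_ <| tendsto_integral_pow_mul_add_mul_sq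
    (μ := fun n ↦ poissonMeasure (r n)) (W := fun n k ↦ ((k : ℝ) - r n) / √(r n : ℝ))
    (m := fun q ↦ ∫ x, x ^ q ∂gaussianReal 0 1) (ε := fun n ↦ √θs / (√n * T))
    (fun n q ↦ ?_) (fun q ↦ ?_) ?_ _ p
  · filter_upwards [eventually_gt_atTop 0] with n hn
    simp only [hr, sqrt_mul_sq_div_sub_eq hθ hT (Nat.cast_pos.2 hn)]
    rfl
  · simpa only [div_pow] using (integrable_pow_sub_poissonMeasure (r n) _ q).div_const _
  · simpa only [div_pow, integral_div, Function.comp_def, poissonCentralMoment] using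
      (tendsto_poissonCentralMoment_div_sqrt_pow q).comp hr_tendsto
  · exact tendsto_const_nhds.div_atTop <|
      (tendsto_sqrt_atTop.comp tendsto_natCast_atTop_atTop).atTop_mul_const hT
end

section
/- Let λ > 0 and let p > 1 be a real number. For t > 0, let X_t be an ℕ-valued random variable with Poisson distribution of parameter λ·t. Then E[|X_t − λt|^p]/t → λ as t → 0+; that is, the p-th absolute central moment of a Poisson variable with small mean is asymptotically linear in t, with slope λ, regardless of the value of p. -/
open Filter Topology Real Nat

/-! The quantity in question is `λ · m(λt) / (λt)`, where `m(μ)` is the `p`-th absolute central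
moment of a Poisson variable of mean `μ`. The `k`-th term of `m(μ) / μ`, namely
`|k - μ|^p e^{-μ} μ^{k-1} / k!`, tends to `1` for `k = 1` and to `0` otherwise as `μ → 0⁺`; for
`k = 0` it is `μ^{p-1} e^{-μ}`, which is where `p > 1` enters. For `0 < μ ≤ 1` the terms are
dominated by the summable sequence `(2^p)^k / k!`, so dominated convergence for series gives
`m(μ) / μ → 1`. -/

noncomputable def poissonAbsCentralMoment (p μ : ℝ) : ℝ :=
  ∑' k : ℕ, |(k : ℝ) - μ| ^ p * (exp (-μ) * μ ^ k / k !)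

lemma abs_natCast_sub_rpow_le {p μ : ℝ} (hp : 0 ≤ p) (hμ₀ : 0 ≤ μ) (hμ₁ : μ ≤ 1) {k : ℕ}
    (hk : k ≠ 0) : |(k : ℝ) - μ| ^ p ≤ ((2 : ℝ) ^ p) ^ k := by
  have hk₁ : (1 : ℝ) ≤ k := by exact_mod_cast Nat.one_le_iff_ne_zero.mpr hk
  have h : |(k : ℝ) - μ| ≤ 2 ^ k := by
    rw [abs_of_nonneg (by linarith)]
    have : (k : ℝ) < 2 ^ k := by exact_mod_cast Nat.lt_two_pow_self
    linarith
  rw [rpow_pow_comm zero_le_two]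
  exact rpow_le_rpow (abs_nonneg _) h hp

lemma poisson_term_succ_div (x μ : ℝ) (hμ : μ ≠ 0) (j : ℕ) :
    x * (exp (-μ) * μ ^ (j + 1) / (j + 1 : ℕ) !) / μ = x * exp (-μ) * μ ^ j / (j + 1 : ℕ) ! := by
  field_simp
  ring

lemma poisson_term_div_le {p μ : ℝ} (hp : 1 ≤ p) (hμ₀ : 0 < μ) (hμ₁ : μ ≤ 1) (k : ℕ) :
    |(k : ℝ) - μ| ^ p * (exp (-μ) * μ ^ k / k !) / μ ≤ ((2 : ℝ) ^ p) ^ k / k ! := by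
  have hexp : exp (-μ) ≤ 1 := exp_le_one_iff.mpr (by linarith)
  rcases k with _ | j
  · have hμp : μ ^ p / μ ≤ 1 := by
      rw [← rpow_sub_one hμ₀.ne']
      exact rpow_le_one hμ₀.le hμ₁ (by linarith)
    calc |((0 : ℕ) : ℝ) - μ| ^ p * (exp (-μ) * μ ^ 0 / (0 : ℕ) !) / μ = μ ^ p / μ * exp (-μ) := by
          simp only [Nat.cast_zero, zero_sub, abs_neg, abs_of_pos hμ₀, pow_zero, mul_one,
            factorial_zero, Nat.cast_one, div_one]
          ring
      _ ≤ 1 * 1 := by gcongr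
      _ = ((2 : ℝ) ^ p) ^ 0 / (0 : ℕ) ! := by simp
  · rw [poisson_term_succ_div _ _ hμ₀.ne']
    gcongr
    calc |((j + 1 : ℕ) : ℝ) - μ| ^ p * exp (-μ) * μ ^ j ≤ ((2 : ℝ) ^ p) ^ (j + 1) * 1 * 1 := by
          gcongr
          · exact abs_natCast_sub_rpow_le (by linarith) hμ₀.le hμ₁ j.succ_ne_zero
          · exact pow_le_one₀ hμ₀.le hμ₁
      _ = ((2 : ℝ) ^ p) ^ (j + 1) := by ring

lemma tendsto_poisson_term_div {p : ℝ} (hp : 1 < p) (k : ℕ) :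
    Tendsto (fun μ : ℝ => |(k : ℝ) - μ| ^ p * (exp (-μ) * μ ^ k / k !) / μ) (𝓝[>] 0)
      (𝓝 (if k = 1 then 1 else 0)) := by
  rcases k with _ | j
  · have hlim : Tendsto (fun μ : ℝ => μ ^ (p - 1) * exp (-μ)) (𝓝[>] 0) (𝓝 0) := by
      have : ContinuousAt (fun μ : ℝ => μ ^ (p - 1) * exp (-μ)) 0 := by
        fun_prop (disch := exact Or.inr (by linarith))
      simpa [zero_rpow (by linarith : p - 1 ≠ 0)] using this.tendsto.mono_left nhdsWithin_le_nhds
    refine hlim.congr' ?_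
    filter_upwards [self_mem_nhdsWithin] with μ (hμ : 0 < μ)
    simp only [rpow_sub_one hμ.ne', Nat.cast_zero, zero_sub, abs_neg, abs_of_pos hμ, pow_zero,
      mul_one, factorial_zero, Nat.cast_one, div_one]
    ring
  · have hcont : Continuous
        (fun μ : ℝ => |((j + 1 : ℕ) : ℝ) - μ| ^ p * exp (-μ) * μ ^ j / (j + 1 : ℕ) !) := by
      fun_prop (disch := linarith)
    have hlim := (hcont.tendsto 0).mono_left (nhdsWithin_le_nhds (s := Set.Ioi 0))
    refine (hlim.congr' ?_).trans (le_of_eq ?_)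
    · filter_upwards [self_mem_nhdsWithin] with μ (hμ : 0 < μ)
      exact (poisson_term_succ_div _ _ hμ.ne' j).symm
    · rcases j with _ | i <;> simp

lemma tendsto_poissonAbsCentralMoment_div {p : ℝ} (hp : 1 < p) :
    Tendsto (fun μ => poissonAbsCentralMoment p μ / μ) (𝓝[>] 0) (𝓝 1) := by
  have hdom : ∀ᶠ μ in 𝓝[>] (0 : ℝ), ∀ k : ℕ,
      ‖|(k : ℝ) - μ| ^ p * (exp (-μ) * μ ^ k / k !) / μ‖ ≤ ((2 : ℝ) ^ p) ^ k / k ! := by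
    filter_upwards [Ioc_mem_nhdsGT zero_lt_one] with μ ⟨hμ₀, hμ₁⟩ k
    rw [Real.norm_of_nonneg (by positivity)]
    exact poisson_term_div_le hp.le hμ₀ hμ₁ k
  simpa [poissonAbsCentralMoment, tsum_div_const] using
    tendsto_tsum_of_dominated_convergence (summable_pow_div_factorial _)
      (tendsto_poisson_term_div hp) hdom

/-- For a Poisson variable `X_t` with parameter `λ·t`, the `p`-th absolute central moment
`E[|X_t − λt|^p] = Σ_k |k − λt|^p·exp(−λt)·(λt)^k/k!` satisfies
`E[|X_t − λt|^p]/t → λ` as `t → 0⁺`, for every real `p > 1`. -/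
theorem poisson_small_time_central_moment
    (lam : ℝ) (hlam : 0 < lam) (p : ℝ) (hp : 1 < p) :
    Tendsto (fun t : ℝ =>
        (∑' k : ℕ, |(k : ℝ) - lam * t| ^ p *
          (Real.exp (-(lam * t)) * (lam * t) ^ k / Nat.factorial k)) / t)
      (𝓝[>] 0) (𝓝 lam) := by
  have hscale : Tendsto (lam * ·) (𝓝[>] 0) (𝓝[>] 0) :=
    tendsto_iff_comap.mpr (comap_mulLeft_nhdsGT_zero hlam).ge
  have hlim := ((tendsto_poissonAbsCentralMoment_div hp).comp hscale).const_mul lam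
  rw [mul_one] at hlim
  refine hlim.congr fun t => ?_
  rw [Function.comp_apply, mul_div_assoc', mul_div_mul_left _ _ hlam.ne']
  rfl
end

section
/- Let r ∈ [0,1), and let a, b : ℝ → ℝ be measurable functions with a(s) ≥ 0, b(s) > 0 and a(s)/b(s) ≤ r for all s. Suppose ρ, ρ' : [0,∞) → [0,∞] are measurable and satisfy ρ'(t) = ∫_0^t a(s)·e^{−b(s)·(t−s)}·ρ(s) ds for all t ≥ 0 (integrals taken in [0,∞]). Then for every t ≥ 0: ∫_0^t ρ'(u) du ≤ r·∫_0^t ρ(u) du. -/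
/-!
Exchanging the order of integration over the triangle `0 < s ≤ u ≤ t` (Tonelli) turns
`∫_0^t ρ'` into `∫_0^t (∫_s^t a(s) e^{-b(s)(u-s)} du) ρ(s) ds`, and the inner integral is at most
`∫_s^∞ a(s) e^{-b(s)(u-s)} du = a(s)/b(s) ≤ r`.
-/

open MeasureTheory Set ENNReal

theorem lintegral_Ioi_ofReal_exp_neg_mul_sub {c : ℝ} (hc : 0 < c) (s : ℝ) :
    ∫⁻ u in Ioi s, ENNReal.ofReal (Real.exp (-c * (u - s))) = ENNReal.ofReal c⁻¹ := by
  have hshift : ∀ u, Real.exp (-c * (u - s)) = Real.exp (c * s) * Real.exp (-c * u) := by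
    intro u; rw [← Real.exp_add]; ring_nf
  have hint : IntegrableOn (fun u => Real.exp (c * s) * Real.exp (-c * u)) (Ioi s) :=
    (integrableOn_exp_mul_Ioi (neg_neg_of_pos hc) s).const_mul _
  simp_rw [hshift]
  rw [← ofReal_integral_eq_lintegral_ofReal hint (.of_forall fun u => by positivity),
    integral_const_mul, integral_exp_mul_Ioi (neg_neg_of_pos hc), neg_div_neg_eq,
    ← mul_div_assoc, ← Real.exp_add]
  simp [div_eq_mul_inv]

theorem lintegral_Ioc_ofReal_mul_exp_le (A : ℝ) {c : ℝ} (hc : 0 < c) (s t : ℝ) :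
    ∫⁻ u in Ioc s t, ENNReal.ofReal (A * Real.exp (-c * (u - s))) ≤ ENNReal.ofReal (A / c) :=
  calc ∫⁻ u in Ioc s t, ENNReal.ofReal (A * Real.exp (-c * (u - s)))
      ≤ ∫⁻ u in Ioi s, ENNReal.ofReal A * ENNReal.ofReal (Real.exp (-c * (u - s))) := by
        simp_rw [ENNReal.ofReal_mul' (Real.exp_nonneg _)]
        exact lintegral_mono_set Ioc_subset_Ioi_self
    _ = ENNReal.ofReal (A / c) := by
        rw [lintegral_const_mul _ (by fun_prop), lintegral_Ioi_ofReal_exp_neg_mul_sub hc,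
          ← ENNReal.ofReal_mul' (inv_nonneg.2 hc.le), div_eq_mul_inv]

theorem lintegral_Ioc_lintegral_Ioc_comm {f : ℝ → ℝ → ℝ≥0∞} (hf : Measurable (Function.uncurry f))
    (x t : ℝ) :
    ∫⁻ u in Ioc x t, ∫⁻ s in Ioc x u, f s u = ∫⁻ s in Ioc x t, ∫⁻ u in Ioc s t, f s u := by
  set g : ℝ → ℝ → ℝ≥0∞ := fun u s => if s ≤ u then f s u else 0
  have hg : Measurable (Function.uncurry g) :=
    Measurable.ite (measurableSet_le measurable_snd measurable_fst) (hf.comp measurable_swap)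
      measurable_const
  have h_left : ∀ u ∈ Ioc x t, ∫⁻ s in Ioc x u, f s u = ∫⁻ s in Ioc x t, g u s := by
    intro u hu
    have : (g u) = (Iic u).indicator (f · u) := by
      ext s; simp [g, indicator_apply]
    rw [this, lintegral_indicator measurableSet_Iic, Measure.restrict_restrict measurableSet_Iic,
      Iic_inter_Ioc_of_le hu.2]
  have h_right : ∀ s ∈ Ioc x t, ∫⁻ u in Ioc x t, g u s = ∫⁻ u in Ioc s t, f s u := by
    intro s hs
    have : (g · s) = (Ici s).indicator (f s) := by
      ext u; simp [g, indicator_apply]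
    have hset : Ici s ∩ Ioc x t = Icc s t := by
      ext u; simp only [mem_inter_iff, mem_Ici, mem_Ioc, mem_Icc]; grind [hs.1]
    rw [this, lintegral_indicator measurableSet_Ici, Measure.restrict_restrict measurableSet_Ici,
      hset, Measure.restrict_congr_set Ioc_ae_eq_Icc]
  calc ∫⁻ u in Ioc x t, ∫⁻ s in Ioc x u, f s u = ∫⁻ u in Ioc x t, ∫⁻ s in Ioc x t, g u s :=
        setLIntegral_congr_fun measurableSet_Ioc h_left
    _ = ∫⁻ s in Ioc x t, ∫⁻ u in Ioc x t, g u s := lintegral_lintegral_swap hg.aemeasurable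
    _ = ∫⁻ s in Ioc x t, ∫⁻ u in Ioc s t, f s u := setLIntegral_congr_fun measurableSet_Ioc h_right

theorem lintegral_Ioc_volterra_le {k : ℝ → ℝ → ℝ≥0∞} (hk : Measurable (Function.uncurry k))
    {ρ : ℝ → ℝ≥0∞} (hρ : Measurable ρ) {C : ℝ≥0∞} {x t : ℝ}
    (hC : ∀ s ∈ Ioc x t, ∫⁻ u in Ioc s t, k s u ≤ C) :
    ∫⁻ u in Ioc x t, ∫⁻ s in Ioc x u, k s u * ρ s ≤ C * ∫⁻ s in Ioc x t, ρ s := by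
  have hkρ : Measurable (Function.uncurry fun s u => k s u * ρ s) :=
    hk.mul (hρ.comp measurable_fst)
  rw [lintegral_Ioc_lintegral_Ioc_comm hkρ, ← lintegral_const_mul _ hρ]
  refine setLIntegral_mono (by fun_prop) fun s hs => ?_
  rw [lintegral_mul_const _ hk.of_uncurry_left]
  gcongr
  exact hC s hs

theorem hawkes_fixed_point_contraction_general
    (r : ℝ)
    (a b : ℝ → ℝ) (ham : Measurable a) (hbm : Measurable b)
    (hb0 : ∀ s, 0 < b s) (hab : ∀ s, a s / b s ≤ r)
    (ρ ρ' : ℝ → ℝ≥0∞) (hρ : Measurable ρ)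
    (hρ' : ∀ t ≥ (0:ℝ), ρ' t =
      ∫⁻ s in Ioc (0:ℝ) t, ENNReal.ofReal (a s * Real.exp (-(b s) * (t - s))) * ρ s) :
    ∀ t ≥ (0:ℝ),
      (∫⁻ u in Ioc (0:ℝ) t, ρ' u) ≤ ENNReal.ofReal r * ∫⁻ u in Ioc (0:ℝ) t, ρ u := by
  intro t _
  have hkernel : Measurable (Function.uncurry fun s u =>
      ENNReal.ofReal (a s * Real.exp (-(b s) * (u - s)))) := by
    fun_prop
  calc ∫⁻ u in Ioc 0 t, ρ' u
      = ∫⁻ u in Ioc 0 t, ∫⁻ s in Ioc 0 u,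
          ENNReal.ofReal (a s * Real.exp (-(b s) * (u - s))) * ρ s :=
        setLIntegral_congr_fun measurableSet_Ioc fun u hu => hρ' u hu.1.le
    _ ≤ ENNReal.ofReal r * ∫⁻ u in Ioc 0 t, ρ u :=
        lintegral_Ioc_volterra_le hkernel hρ fun s _ =>
          (lintegral_Ioc_ofReal_mul_exp_le (a s) (hb0 s) s t).trans (ofReal_le_ofReal (hab s))

/-- Contraction step in the fixed-point construction of the doubly stochastic Hawkes process:
if `a(s)/b(s) ≤ r < 1` and `ρ'(t) = ∫_0^t a(s)·exp(−b(s)·(t−s))·ρ(s) ds` (integrals in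
`[0,∞]`), then `∫_0^t ρ'(u) du ≤ r·∫_0^t ρ(u) du` for every `t ≥ 0`. -/
theorem hawkes_fixed_point_contraction
    (r : ℝ) (hr0 : 0 ≤ r) (hr1 : r < 1)
    (a b : ℝ → ℝ) (ham : Measurable a) (hbm : Measurable b)
    (ha0 : ∀ s, 0 ≤ a s) (hb0 : ∀ s, 0 < b s) (hab : ∀ s, a s / b s ≤ r)
    (ρ ρ' : ℝ → ℝ≥0∞) (hρ : Measurable ρ)
    (hρ' : ∀ t ≥ (0:ℝ), ρ' t =
      ∫⁻ s in Ioc (0:ℝ) t, ENNReal.ofReal (a s * Real.exp (-(b s) * (t - s))) * ρ s) :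
    ∀ t ≥ (0:ℝ),
      (∫⁻ u in Ioc (0:ℝ) t, ρ' u) ≤ ENNReal.ofReal r * ∫⁻ u in Ioc (0:ℝ) t, ρ u :=
  hawkes_fixed_point_contraction_general r a b ham hbm hb0 hab ρ ρ' hρ hρ'
end
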